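/- arXiv:1104.1874 — 3 statements merged into one kernel-verified Lean document; each statement's English description precedes it below -/
import Mathlib

section
/- Let f be holomorphic on a neighborhood of the closed disc of radius R centered at 0 in ℂ, with f(0) = 0. Then for all 0 < r < R, the maximum of |f'(z)| over |z| ≤ r is at most (8R/(R−r)²) times the maximum of |Re f(z)| over |z| ≤ R. -/
/-!
If `Re f ≤ M` on the disc of radius `R`, Borel–Carathéodory bounds `‖f‖` by
`2Mρ/(R - ρ)` on the disc of radius `ρ = (R + r)/2`, and Cauchy's estimate on the disc of
radius `(R - r)/2` about `z` turns this into `‖f' z‖ ≤ 4M(R + r)/(R - r)² ≤ 8RM/(R - r)²`.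
Borel–Carathéodory needs `M > 0`, so this is applied to every `M` above the supremum of
`|Re f|`.
-/

open Metric

namespace Complex

variable {f : ℂ → ℂ} {M R ρ r : ℝ} {z w : ℂ}

theorem norm_le_of_norm_le_of_mapsTo_re_le (hM : 0 < M) (hf : DifferentiableOn ℂ f (ball 0 R))
    (hre : Set.MapsTo f (ball 0 R) {z | z.re ≤ M}) (hf0 : f 0 = 0) (hρR : ρ < R)
    (hw : ‖w‖ ≤ ρ) : ‖f w‖ ≤ 2 * M * ρ / (R - ρ) := by
  have hρ : 0 ≤ ρ := (norm_nonneg w).trans hw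
  have hwR : ‖w‖ < R := hw.trans_lt hρR
  calc ‖f w‖ ≤ 2 * M * ‖w‖ / (R - ‖w‖) :=
        borelCaratheodory_zero hM hf hre ((norm_nonneg w).trans_lt hwR)
          (mem_ball_zero_iff.mpr hwR) hf0
    _ ≤ 2 * M * ρ / (R - ρ) := by gcongr

theorem norm_deriv_le_of_mapsTo_re_le (hM : 0 < M) (hf : DifferentiableOn ℂ f (ball 0 R))
    (hre : Set.MapsTo f (ball 0 R) {z | z.re ≤ M}) (hf0 : f 0 = 0) (hrR : r < R)
    (hz : ‖z‖ ≤ r) : ‖deriv f z‖ ≤ 8 * R / (R - r) ^ 2 * M := by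
  set d := (R - r) / 2
  set ρ := (R + r) / 2
  have hd : 0 < d := by simp only [d]; linarith
  have hρR : ρ < R := by simp only [ρ]; linarith
  have hball : closedBall z d ⊆ closedBall 0 ρ := by
    intro w hw
    rw [mem_closedBall_zero_iff]
    calc ‖w‖ ≤ ‖w - z‖ + ‖z‖ := norm_le_norm_sub_add w z
      _ ≤ d + r := add_le_add (mem_closedBall_iff_norm.mp hw) hz
      _ = ρ := by ring
  have hdiff : DiffContOnCl ℂ f (ball z d) :=
    (hf.mono ((closure_ball_subset_closedBall.trans hball).trans
      (closedBall_subset_ball hρR))).diffContOnCl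
  calc ‖deriv f z‖ ≤ 2 * M * ρ / (R - ρ) / d :=
        norm_deriv_le_of_forall_mem_sphere_norm_le hd hdiff fun w hw =>
          norm_le_of_norm_le_of_mapsTo_re_le hM hf hre hf0 hρR
            (mem_closedBall_zero_iff.mp (hball (sphere_subset_closedBall hw)))
    _ = 4 * M * (R + r) / (R - r) ^ 2 := by
        simp only [d, ρ]; field_simp; ring
    _ ≤ 8 * R / (R - r) ^ 2 * M := by
        rw [div_mul_eq_mul_div]
        exact div_le_div_of_nonneg_right (by nlinarith [norm_nonneg z]) (sq_nonneg _)

end Complex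

theorem borel_caratheodory_deriv_general (f : ℂ → ℂ) (R r : ℝ) (hrR : r < R)
    (U : Set ℂ) (hsub : Metric.closedBall (0 : ℂ) R ⊆ U)
    (hf : DifferentiableOn ℂ f U) (hf0 : f 0 = 0) (z : ℂ) (hz : ‖z‖ ≤ r) :
    ‖deriv f z‖ ≤ (8 * R / (R - r) ^ 2) *
      ⨆ w : Metric.closedBall (0 : ℂ) R, |(f w).re| := by
  set M := ⨆ w : closedBall (0 : ℂ) R, |(f w).re|
  have hR : 0 < R := ((norm_nonneg z).trans hz).trans_lt hrR
  have hC : 0 < 8 * R / (R - r) ^ 2 := by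
    have := sub_pos.2 hrR
    positivity
  have hbdd : BddAbove (Set.range fun w : closedBall (0 : ℂ) R => |(f w).re|) := by
    rw [← Set.image_eq_range (fun w => |(f w).re|)]
    exact (isCompact_closedBall 0 R).bddAbove_image
      ((continuous_abs.comp Complex.continuous_re).comp_continuousOn (hf.continuousOn.mono hsub))
  have hle : ∀ w ∈ closedBall (0 : ℂ) R, |(f w).re| ≤ M := fun w hw => le_ciSup hbdd ⟨w, hw⟩
  have hM : 0 ≤ M := (abs_nonneg _).trans (hle 0 (mem_closedBall_self hR.le))
  rw [← div_le_iff₀' hC]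
  refine le_of_forall_gt_imp_ge_of_dense fun M₀ hM₀ => (div_le_iff₀' hC).2 ?_
  refine Complex.norm_deriv_le_of_mapsTo_re_le (hM.trans_lt hM₀)
    (hf.mono (ball_subset_closedBall.trans hsub)) (fun w hw => ?_) hf0 hrR hz
  exact ((le_abs_self _).trans (hle w (ball_subset_closedBall hw))).trans hM₀.le

theorem borel_caratheodory_deriv (f : ℂ → ℂ) (R r : ℝ) (hr : 0 < r) (hrR : r < R)
    (U : Set ℂ) (hU : IsOpen U) (hsub : Metric.closedBall (0 : ℂ) R ⊆ U)
    (hf : DifferentiableOn ℂ f U) (hf0 : f 0 = 0) (z : ℂ) (hz : ‖z‖ ≤ r) :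
    ‖deriv f z‖ ≤ (8 * R / (R - r) ^ 2) *
      ⨆ w : Metric.closedBall (0 : ℂ) R, |(f w).re| :=
  borel_caratheodory_deriv_general f R r hrR U hsub hf hf0 z hz
end

section
/- Let (λ_n)_{n≥0} be a sequence of complex numbers such that there exist constants C > 0, M ≥ 1 and 0 < ρ < 1 with |λ_n| ≤ C·M·ρⁿ for all n, and |λ_n| ≤ 1 for all n. Then for all ζ ∈ ℂ, the infinite product Z(ζ) = Π_{n≥0}(1 − ζλ_n) converges and satisfies log|Z(ζ)| ≤ C₁·log(M)·log(1+|ζ|) + C₂·|ζ| for constants C₁, C₂ depending only on C and ρ (not on M), provided M is large enough. -/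
/-!
Bounding each factor by `‖1 - ζ λₙ‖ ≤ 1 + |ζ| |λₙ|` gives
`log |Z(ζ)| ≤ ∑ₙ log (1 + |ζ| |λₙ|)`. The first `N` terms are at most `log (1 + |ζ|)` each, as
`|λₙ| ≤ 1`, while the remaining ones are at most `|ζ| C M ρⁿ`, whose tail sum is
`|ζ| C M ρᴺ / (1 - ρ)`. Taking `N ≈ log M / |log ρ|` makes `M ρᴺ ≤ 1`, so `M` enters only
through the number `N` of head terms.
-/

open Filter Finset

theorem log_norm_tprod_one_add_le_tsum_log {ι R : Type*} [NormedCommRing R] [NormOneClass R]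
    [CompleteSpace R] {f : ι → R} (hf : Summable fun i => ‖f i‖) :
    Real.log ‖∏' i, (1 + f i)‖ ≤ ∑' i, Real.log (1 + ‖f i‖) := by
  have hlog_nonneg : ∀ i, 0 ≤ Real.log (1 + ‖f i‖) := fun i =>
    Real.log_nonneg (le_add_of_nonneg_right (norm_nonneg _))
  have hprod_le : ∀ s : Finset ι,
      ‖∏ i ∈ s, (1 + f i)‖ ≤ Real.exp (∑' i, Real.log (1 + ‖f i‖)) := fun s =>
    calc ‖∏ i ∈ s, (1 + f i)‖ ≤ ∏ i ∈ s, ‖1 + f i‖ := s.norm_prod_le _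
      _ ≤ ∏ i ∈ s, Real.exp (Real.log (1 + ‖f i‖)) := by
          gcongr with i
          rw [Real.exp_log (by positivity)]
          exact norm_add_le_of_le norm_one.le le_rfl
      _ = Real.exp (∑ i ∈ s, Real.log (1 + ‖f i‖)) := (Real.exp_sum _ _).symm
      _ ≤ Real.exp (∑' i, Real.log (1 + ‖f i‖)) := Real.exp_le_exp.2 <|
          (Real.summable_log_one_add_of_summable hf).sum_le_tsum _ fun i _ => hlog_nonneg i
  have hnorm_le : ‖∏' i, (1 + f i)‖ ≤ Real.exp (∑' i, Real.log (1 + ‖f i‖)) :=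
    le_of_tendsto' (Tendsto.norm (multipliable_one_add_of_summable hf).hasProd) hprod_le
  rcases (norm_nonneg (∏' i, (1 + f i))).eq_or_lt with hzero | hpos
  · rw [← hzero, Real.log_zero]
    exact tsum_nonneg hlog_nonneg
  · exact (Real.log_le_iff_le_exp hpos).2 hnorm_le

theorem tsum_le_mul_add_geometric_tail {a : ℕ → ℝ} {B K ρ : ℝ} (ha : ∀ n, 0 ≤ a n)
    (hB : ∀ n, a n ≤ B) (hK : ∀ n, a n ≤ K * ρ ^ n) (hρ0 : 0 ≤ ρ) (hρ1 : ρ < 1) (N : ℕ) :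
    ∑' n, a n ≤ N * B + K * ρ ^ N / (1 - ρ) := by
  have hgeo : Summable fun n : ℕ => ρ ^ n := summable_geometric_of_lt_one hρ0 hρ1
  have ha_summable : Summable a := (hgeo.mul_left K).of_nonneg_of_le ha hK
  rw [← ha_summable.sum_add_tsum_nat_add N]
  gcongr ?_ + ?_
  · calc ∑ n ∈ range N, a n ≤ ∑ _n ∈ range N, B := sum_le_sum fun n _ => hB n
      _ = N * B := by rw [sum_const, card_range, nsmul_eq_mul]
  · calc ∑' n, a (n + N) ≤ ∑' n, K * ρ ^ N * ρ ^ n :=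
          ((summable_nat_add_iff N).2 ha_summable).tsum_le_tsum
            (fun n => (hK _).trans_eq (by ring)) (hgeo.mul_left _)
      _ = K * ρ ^ N / (1 - ρ) := by
          rw [tsum_mul_left, tsum_geometric_of_lt_one hρ0 hρ1, div_eq_mul_inv]

theorem exists_nat_le_log_div_add_one_and_mul_pow_le_one {M ρ : ℝ} (hM : 1 ≤ M) (hρ0 : 0 < ρ)
    (hρ1 : ρ < 1) : ∃ N : ℕ, (N : ℝ) ≤ Real.log M / -Real.log ρ + 1 ∧ M * ρ ^ N ≤ 1 := by
  have hL : 0 < -Real.log ρ := neg_pos.2 (Real.log_neg hρ0 hρ1)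
  have hM0 : 0 < M := zero_lt_one.trans_le hM
  have hratio : 0 ≤ Real.log M / -Real.log ρ := div_nonneg (Real.log_nonneg hM) hL.le
  refine ⟨⌈Real.log M / -Real.log ρ⌉₊, (Nat.ceil_lt_add_one hratio).le, ?_⟩
  have hlogM : Real.log M ≤ ⌈Real.log M / -Real.log ρ⌉₊ * -Real.log ρ :=
    (div_le_iff₀ hL).1 (Nat.le_ceil _)
  rw [← le_div_iff₀' hM0, one_div, Real.pow_le_iff_le_log hρ0 (inv_pos.2 hM0), Real.log_inv]
  linarith

section GeometricDecay

variable {R : Type*} [NormedCommRing R] {lam : ℕ → R} {K ρ : ℝ}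

theorem norm_mul_le_geometric (hK : ∀ n, ‖lam n‖ ≤ K * ρ ^ n) (ζ : R) (n : ℕ) :
    ‖ζ * lam n‖ ≤ ‖ζ‖ * K * ρ ^ n := by
  rw [mul_assoc]
  exact (norm_mul_le _ _).trans (mul_le_mul_of_nonneg_left (hK n) (norm_nonneg ζ))

theorem summable_norm_mul_of_norm_le_geometric (hρ0 : 0 ≤ ρ) (hρ1 : ρ < 1)
    (hK : ∀ n, ‖lam n‖ ≤ K * ρ ^ n) (ζ : R) : Summable fun n => ‖ζ * lam n‖ :=
  ((summable_geometric_of_lt_one hρ0 hρ1).mul_left (‖ζ‖ * K)).of_nonneg_of_le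
    (fun _ => norm_nonneg _) (norm_mul_le_geometric hK ζ)

theorem multipliable_one_sub_mul_of_norm_le_geometric [NormOneClass R] [CompleteSpace R]
    (hρ0 : 0 ≤ ρ) (hρ1 : ρ < 1) (hK : ∀ n, ‖lam n‖ ≤ K * ρ ^ n) (ζ : R) :
    Multipliable fun n => 1 - ζ * lam n := by
  simp_rw [sub_eq_add_neg]
  exact multipliable_one_add_of_summable <| by
    simpa only [norm_neg] using summable_norm_mul_of_norm_le_geometric hρ0 hρ1 hK ζ

theorem log_norm_tprod_one_sub_mul_le [NormOneClass R] [CompleteSpace R]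
    (hρ0 : 0 ≤ ρ) (hρ1 : ρ < 1) (hK : ∀ n, ‖lam n‖ ≤ K * ρ ^ n) (hone : ∀ n, ‖lam n‖ ≤ 1)
    (ζ : R) (N : ℕ) :
    Real.log ‖∏' n, (1 - ζ * lam n)‖ ≤ N * Real.log (1 + ‖ζ‖) + ‖ζ‖ * K * ρ ^ N / (1 - ρ) := by
  have hsummable := summable_norm_mul_of_norm_le_geometric hρ0 hρ1 hK ζ
  simp_rw [sub_eq_add_neg]
  refine (log_norm_tprod_one_add_le_tsum_log (by simpa only [norm_neg] using hsummable)).trans ?_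
  simp only [norm_neg]
  refine tsum_le_mul_add_geometric_tail (fun n => Real.log_nonneg ?_) (fun n => ?_) (fun n => ?_)
    hρ0 hρ1 N
  · exact le_add_of_nonneg_right (norm_nonneg _)
  · gcongr
    exact (norm_mul_le _ _).trans (mul_le_of_le_one_right (norm_nonneg ζ) (hone n))
  · calc Real.log (1 + ‖ζ * lam n‖) ≤ ‖ζ * lam n‖ := by
          linarith [Real.log_le_sub_one_of_pos (by positivity : 0 < 1 + ‖ζ * lam n‖)]
      _ ≤ ‖ζ‖ * K * ρ ^ n := norm_mul_le_geometric hK ζ n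

end GeometricDecay

theorem determinant_growth_bound (C ρ : ℝ) (hC : 0 < C) (hρ0 : 0 < ρ) (hρ1 : ρ < 1) :
    ∃ C₁ C₂ M₀ : ℝ, 0 < C₁ ∧ 0 < C₂ ∧ 1 ≤ M₀ ∧
      ∀ M : ℝ, M₀ ≤ M → ∀ lam : ℕ → ℂ,
        (∀ n, ‖lam n‖ ≤ C * M * ρ ^ n) → (∀ n, ‖lam n‖ ≤ 1) →
        ∀ ζ : ℂ, Multipliable (fun n => 1 - ζ * lam n) ∧
          Real.log ‖∏' n : ℕ, (1 - ζ * lam n)‖ ≤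
            C₁ * Real.log M * Real.log (1 + ‖ζ‖) + C₂ * ‖ζ‖ := by
  have hL : 0 < -Real.log ρ := neg_pos.2 (Real.log_neg hρ0 hρ1)
  refine ⟨1 / -Real.log ρ + 1, C / (1 - ρ), Real.exp 1, by positivity,
    div_pos hC (sub_pos.2 hρ1), Real.one_le_exp zero_le_one, ?_⟩
  intro M hM lam hK hone ζ
  have hlogM : 1 ≤ Real.log M := (Real.le_log_iff_exp_le ((Real.exp_pos 1).trans_le hM)).2 hM
  obtain ⟨N, hN, hMρ⟩ := exists_nat_le_log_div_add_one_and_mul_pow_le_one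
    ((Real.one_le_exp zero_le_one).trans hM) hρ0 hρ1
  refine ⟨multipliable_one_sub_mul_of_norm_le_geometric hρ0.le hρ1 hK ζ,
    (log_norm_tprod_one_sub_mul_le hρ0.le hρ1 hK hone ζ N).trans (add_le_add ?_ ?_)⟩
  · have hN' : (N : ℝ) ≤ (1 / -Real.log ρ + 1) * Real.log M :=
      calc (N : ℝ) ≤ Real.log M / -Real.log ρ + Real.log M := hN.trans (by gcongr)
        _ = (1 / -Real.log ρ + 1) * Real.log M := by ring
    exact mul_le_mul_of_nonneg_right hN'
      (Real.log_nonneg (le_add_of_nonneg_right (norm_nonneg ζ)))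
  · calc ‖ζ‖ * (C * M) * ρ ^ N / (1 - ρ) = ‖ζ‖ * C * (M * ρ ^ N) / (1 - ρ) := by ring
      _ ≤ ‖ζ‖ * C * 1 / (1 - ρ) := by gcongr
      _ = C / (1 - ρ) * ‖ζ‖ := by ring
end

section
/- Let H be a Hilbert space with orthonormal basis (e_l)_{l∈ℕ} and M : H → H a compact operator. Then for every n ∈ ℕ, the n-th singular value satisfies s_n(M) ≤ Σ_{l≥n} ‖M e_l‖. -/
open scoped ENNReal

/-- The `n`-th singular value of an operator, via the Courant minimax formula:
the infimum over subspaces `F` of dimension `n` of the supremum of `‖M f‖` over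
unit vectors `f` orthogonal to `F`. -/
noncomputable def singularValue {H : Type*} [NormedAddCommGroup H] [InnerProductSpace ℂ H]
    (M : H →L[ℂ] H) (n : ℕ) : ℝ :=
  ⨅ F : {F : Submodule ℂ H // Module.finrank ℂ F = n},
    ⨆ f : {f : H // f ∈ (F : Submodule ℂ H)ᗮ ∧ ‖f‖ ≤ 1}, ‖M (f : H)‖

/-!
Take `F = span (e_0, …, e_{n-1})` in the minimax formula. A vector `f ⊥ F` with `‖f‖ ≤ 1` has
coefficients `⟪e_l, f⟫` that vanish for `l < n` and have modulus at most `1` otherwise, so expanding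
`M f = ∑ ⟪e_l, f⟫ M e_l` gives `‖M f‖ ≤ ∑_{l ≥ n} ‖M e_l‖`. Estimating in `ℝ≥0∞` makes the
bound meaningful without any summability assumption.
-/

open scoped InnerProductSpace

theorem ENNReal.ofReal_iSup_le {ι : Sort*} {f : ι → ℝ} {c : ℝ≥0∞}
    (h : ∀ i, ENNReal.ofReal (f i) ≤ c) : ENNReal.ofReal (⨆ i, f i) ≤ c := by
  by_cases hc : c = ∞
  · simp [hc]
  rw [ENNReal.ofReal_le_iff_le_toReal hc]
  exact Real.iSup_le (fun i => (ENNReal.ofReal_le_iff_le_toReal hc).1 (h i)) ENNReal.toReal_nonneg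

theorem singularValue_le_iSup_orthogonal {H : Type*} [NormedAddCommGroup H]
    [InnerProductSpace ℂ H] (M : H →L[ℂ] H) {n : ℕ} (F : Submodule ℂ H)
    (hF : Module.finrank ℂ F = n) :
    singularValue M n ≤ ⨆ f : {f : H // f ∈ Fᗮ ∧ ‖f‖ ≤ 1}, ‖M (f : H)‖ := by
  unfold singularValue
  exact ciInf_le ⟨0, by rintro _ ⟨_, rfl⟩; exact Real.iSup_nonneg fun _ => norm_nonneg _⟩
    (⟨F, hF⟩ : {F : Submodule ℂ H // Module.finrank ℂ F = n})

namespace HilbertBasis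

variable {ι 𝕜 E F : Type*} [RCLike 𝕜] [NormedAddCommGroup E] [InnerProductSpace 𝕜 E]
  [NormedAddCommGroup F] [NormedSpace 𝕜 F] (b : HilbertBasis ι 𝕜 E)

theorem norm_repr_apply_le (x : E) (i : ι) : ‖b.repr x i‖ ≤ ‖x‖ :=
  (lp.norm_apply_le_norm two_ne_zero (b.repr x) i).trans (b.repr.norm_map x).le

theorem enorm_apply_le_tsum (T : E →L[𝕜] F) (x : E) :
    ‖T x‖ₑ ≤ ∑' i, ‖b.repr x i‖ₑ * ‖T (b i)‖ₑ := by
  have hT : HasSum (fun i => b.repr x i • T (b i)) (T x) := by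
    simpa using (b.hasSum_repr x).mapL T
  rw [← hT.tsum_eq]
  simpa only [enorm_smul] using
    enorm_tsum_le_tsum_enorm (f := fun i => b.repr x i • T (b i))

theorem enorm_apply_le_tsum_indicator (T : E →L[𝕜] F) {s : Set ι} {x : E}
    (hxs : ∀ i ∈ s, ⟪b i, x⟫_𝕜 = 0) (hx : ‖x‖ ≤ 1) :
    ‖T x‖ₑ ≤ ∑' i, sᶜ.indicator (fun i => ‖T (b i)‖ₑ) i := by
  refine (b.enorm_apply_le_tsum T x).trans (ENNReal.tsum_le_tsum fun i => ?_)
  by_cases hi : i ∈ s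
  · simp [b.repr_apply_apply, hxs i hi]
  · rw [Set.indicator_of_mem hi]
    have : ‖b.repr x i‖ₑ ≤ 1 := by
      rw [← ofReal_norm, ENNReal.ofReal_le_one]
      exact (b.norm_repr_apply_le x i).trans hx
    simpa using mul_le_mul_left this ‖T (b i)‖ₑ

end HilbertBasis

theorem singularValue_le_tsum_norm_general {H : Type*} [NormedAddCommGroup H]
    [InnerProductSpace ℂ H]
    (b : HilbertBasis ℕ ℂ H) (M : H →L[ℂ] H) (n : ℕ) :
    ENNReal.ofReal (singularValue M n) ≤
      ∑' l : ℕ, if n ≤ l then (‖M (b l)‖₊ : ℝ≥0∞) else 0 := by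
  set F : Submodule ℂ H := Submodule.span ℂ (Set.range fun i : Fin n => b i)
  have hF : Module.finrank ℂ F = n := by
    simpa [Function.comp_def] using finrank_span_eq_card
      (b.orthonormal.linearIndependent.comp Fin.val Fin.val_injective)
  refine (ENNReal.ofReal_le_ofReal (singularValue_le_iSup_orthogonal M F hF)).trans
    (ENNReal.ofReal_iSup_le fun ⟨f, hfF, hf1⟩ => ?_)
  have hbf : ∀ l ∈ Set.Iio n, ⟪b l, f⟫_ℂ = 0 := fun l hl =>
    (Submodule.mem_orthogonal F f).mp hfF _ (Submodule.subset_span ⟨⟨l, hl⟩, rfl⟩)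
  rw [ofReal_norm]
  refine (b.enorm_apply_le_tsum_indicator M hbf hf1).trans_eq (tsum_congr fun l => ?_)
  simp [Set.indicator_apply, enorm_eq_nnnorm]

theorem singularValue_le_tsum_norm {H : Type*} [NormedAddCommGroup H]
    [InnerProductSpace ℂ H] [CompleteSpace H]
    (b : HilbertBasis ℕ ℂ H) (M : H →L[ℂ] H) (hM : IsCompactOperator M) (n : ℕ) :
    ENNReal.ofReal (singularValue M n) ≤
      ∑' l : ℕ, if n ≤ l then (‖M (b l)‖₊ : ℝ≥0∞) else 0 :=
  singularValue_le_tsum_norm_general b M n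
end
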